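/- arXiv:1902.06025 — 3 statements merged into one kernel-verified Lean document; each statement's English description precedes it below -/
import Mathlib

section
/- Let α₃, α₄, α₆, u₃, u₄ be real constants with |u₃| ≤ κ_{u3}, |u₄| ≤ κ_{u4}. Define f₂ : ℝ³ → ℝ by f₂(x₁, x₃, x₄) = α₃x₄u₄cos(x₁) - α₃x₃u₄sin(x₁) - α₃x₄u₃sin(x₁) - α₃x₃u₃cos(x₁) + α₄u₃u₄cos(2x₁) + (1/2)α₄(u₄² - u₃²)sin(2x₁) + α₆. Then for all (x₁,x₃,x₄) and (x̂₁,x̂₃,x̂₄) with |x₃|,|x̂₃| ≤ κ_{x3} and |x₄|,|x̂₄| ≤ κ_{x4}, one has |f₂(x) - f₂(x̂)| ≤ γ̃_f · ‖x - x̂‖₂ where γ̃_f = |α₃|((κ_{u3}+κ_{u4})(1+κ_{x3}+κ_{x4}) + 2κ_{u3}κ_{u4}) + |α₄|(κ_{u3}(1+κ_{u3}) + κ_{u4}(1+κ_{u4})). -/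
/-- Cauchy–Schwarz in two variables with trig: `|a cos t + b sin t| ≤ √(a² + b²)`. -/
lemma aux_trig_cs (a b t : ℝ) :
    |a * Real.cos t + b * Real.sin t| ≤ Real.sqrt (a ^ 2 + b ^ 2) := by
  have h1 := Real.sin_sq_add_cos_sq t
  have h2 : (0:ℝ) ≤ a ^ 2 + b ^ 2 := by positivity
  have h3 := Real.sq_sqrt h2
  have h4 := Real.sqrt_nonneg (a ^ 2 + b ^ 2)
  rw [abs_le]
  constructor <;> nlinarith [sq_nonneg (a * Real.sin t - b * Real.cos t),
    sq_nonneg (a * Real.cos t + b * Real.sin t - Real.sqrt (a ^ 2 + b ^ 2)),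
    sq_nonneg (a * Real.cos t + b * Real.sin t + Real.sqrt (a ^ 2 + b ^ 2))]

lemma aux_sin_lip (p q : ℝ) : |Real.sin p - Real.sin q| ≤ |p - q| := by
  have h := Real.abs_sin_le_abs (x := (p - q) / 2)
  rw [Real.sin_sub_sin]
  calc |2 * Real.sin ((p - q) / 2) * Real.cos ((p + q) / 2)|
      = 2 * |Real.sin ((p - q) / 2)| * |Real.cos ((p + q) / 2)| := by
        rw [abs_mul, abs_mul, abs_two]
    _ ≤ 2 * |(p - q) / 2| * 1 := by
        apply mul_le_mul (by gcongr) (Real.abs_cos_le_one _) (abs_nonneg _)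
          (by positivity)
    _ = |p - q| := by rw [abs_div, abs_two]; ring

lemma aux_cos_lip (p q : ℝ) : |Real.cos p - Real.cos q| ≤ |p - q| := by
  have h := Real.abs_sin_le_abs (x := (p - q) / 2)
  rw [Real.cos_sub_cos]
  calc |-2 * Real.sin ((p + q) / 2) * Real.sin ((p - q) / 2)|
      = 2 * |Real.sin ((p - q) / 2)| * |Real.sin ((p + q) / 2)| := by
        rw [abs_mul, abs_mul, abs_neg, abs_two]; ring
    _ ≤ 2 * |(p - q) / 2| * 1 := by
        apply mul_le_mul (by gcongr) (Real.abs_sin_le_one _) (abs_nonneg _)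
          (by positivity)
    _ = |p - q| := by rw [abs_div, abs_two]; ring

/-- `|C (cos p - cos q) + S (sin p - sin q)| ≤ √(C² + S²) |p - q|`. -/
lemma aux_wave (C S p q : ℝ) :
    |C * (Real.cos p - Real.cos q) + S * (Real.sin p - Real.sin q)| ≤
      Real.sqrt (C ^ 2 + S ^ 2) * |p - q| := by
  rw [Real.cos_sub_cos, Real.sin_sub_sin]
  have key : C * (-2 * Real.sin ((p + q) / 2) * Real.sin ((p - q) / 2))
      + S * (2 * Real.sin ((p - q) / 2) * Real.cos ((p + q) / 2))
      = (2 * Real.sin ((p - q) / 2)) *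
        (S * Real.cos ((p + q) / 2) + (-C) * Real.sin ((p + q) / 2)) := by ring
  rw [key, abs_mul]
  have h1 := aux_trig_cs S (-C) ((p + q) / 2)
  have h2 := Real.abs_sin_le_abs (x := (p - q) / 2)
  have h3 : Real.sqrt (S ^ 2 + (-C) ^ 2) = Real.sqrt (C ^ 2 + S ^ 2) := by
    ring_nf
  have h4 : |2 * Real.sin ((p - q) / 2)| ≤ |p - q| := by
    rw [abs_mul, abs_two]
    calc 2 * |Real.sin ((p - q) / 2)| ≤ 2 * |(p - q) / 2| := by gcongr
      _ = |p - q| := by rw [abs_div, abs_two]; ring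
  calc |2 * Real.sin ((p - q) / 2)| *
        |S * Real.cos ((p + q) / 2) + -C * Real.sin ((p + q) / 2)|
      ≤ |p - q| * Real.sqrt (C ^ 2 + S ^ 2) := by
        apply mul_le_mul h4 (h3 ▸ h1) (abs_nonneg _) (abs_nonneg _)
    _ = Real.sqrt (C ^ 2 + S ^ 2) * |p - q| := mul_comm _ _

set_option maxHeartbeats 1000000 in
theorem stmt_8 (α₃ α₄ α₆ u₃ u₄ κu3 κu4 κx3 κx4 : ℝ)
    (hκu3 : 0 ≤ κu3) (hκu4 : 0 ≤ κu4) (hκx3 : 0 ≤ κx3) (hκx4 : 0 ≤ κx4)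
    (hu3 : |u₃| ≤ κu3) (hu4 : |u₄| ≤ κu4)
    (f₂ : EuclideanSpace ℝ (Fin 3) → ℝ)
    (hf₂ : ∀ x, f₂ x =
      α₃ * x 2 * u₄ * Real.cos (x 0) - α₃ * x 1 * u₄ * Real.sin (x 0)
      - α₃ * x 2 * u₃ * Real.sin (x 0) - α₃ * x 1 * u₃ * Real.cos (x 0)
      + α₄ * u₃ * u₄ * Real.cos (2 * x 0)
      + (1 / 2) * α₄ * (u₄ ^ 2 - u₃ ^ 2) * Real.sin (2 * x 0) + α₆) :
    ∀ x y : EuclideanSpace ℝ (Fin 3),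
      |x 1| ≤ κx3 → |y 1| ≤ κx3 → |x 2| ≤ κx4 → |y 2| ≤ κx4 →
      |f₂ x - f₂ y| ≤
        (|α₃| * ((κu3 + κu4) * (1 + κx3 + κx4) + 2 * κu3 * κu4)
          + |α₄| * (κu3 * (1 + κu3) + κu4 * (1 + κu4))) * ‖x - y‖ := by
  intro x y hx1 hy1 hx2 hy2
  set d0 := x 0 - y 0 with hd0
  set d1 := x 1 - y 1 with hd1
  set d2 := x 2 - y 2 with hd2
  -- norm identity
  have hnorm : ‖x - y‖ = Real.sqrt (d0 ^ 2 + d1 ^ 2 + d2 ^ 2) := by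
    rw [EuclideanSpace.norm_eq, Fin.sum_univ_three]
    have e0 : (x - y) 0 = d0 := rfl
    have e1 : (x - y) 1 = d1 := rfl
    have e2 : (x - y) 2 = d2 := rfl
    rw [e0, e1, e2]
    simp [Real.norm_eq_abs, sq_abs]
  have hN : 0 ≤ ‖x - y‖ := norm_nonneg _
  have hd0N : |d0| ≤ ‖x - y‖ := by
    rw [hnorm, ← Real.sqrt_sq_eq_abs]
    exact Real.sqrt_le_sqrt (by nlinarith [sq_nonneg d1, sq_nonneg d2])
  have hd12N : Real.sqrt (d1 ^ 2 + d2 ^ 2) ≤ ‖x - y‖ := by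
    rw [hnorm]
    exact Real.sqrt_le_sqrt (by nlinarith [sq_nonneg d0])
  -- component bounds
  have hcs : |d2 * Real.cos (x 0) + (-d1) * Real.sin (x 0)| ≤ ‖x - y‖ := by
    refine le_trans (aux_trig_cs d2 (-d1) (x 0)) ?_
    calc Real.sqrt (d2 ^ 2 + (-d1) ^ 2) = Real.sqrt (d1 ^ 2 + d2 ^ 2) := by ring_nf
      _ ≤ ‖x - y‖ := hd12N
  have hcs2 : |(-d1) * Real.cos (x 0) + (-d2) * Real.sin (x 0)| ≤ ‖x - y‖ := by
    refine le_trans (aux_trig_cs (-d1) (-d2) (x 0)) ?_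
    calc Real.sqrt ((-d1) ^ 2 + (-d2) ^ 2) = Real.sqrt (d1 ^ 2 + d2 ^ 2) := by
          ring_nf
      _ ≤ ‖x - y‖ := hd12N
  have hcosl : |Real.cos (x 0) - Real.cos (y 0)| ≤ |d0| := aux_cos_lip _ _
  have hsinl : |Real.sin (x 0) - Real.sin (y 0)| ≤ |d0| := aux_sin_lip _ _
  -- k and h differences
  have hk : |(x 2 * Real.cos (x 0) - x 1 * Real.sin (x 0))
      - (y 2 * Real.cos (y 0) - y 1 * Real.sin (y 0))| ≤
      (1 + κx3 + κx4) * ‖x - y‖ := by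
    have decomp : (x 2 * Real.cos (x 0) - x 1 * Real.sin (x 0))
        - (y 2 * Real.cos (y 0) - y 1 * Real.sin (y 0))
        = (d2 * Real.cos (x 0) + (-d1) * Real.sin (x 0))
          + y 2 * (Real.cos (x 0) - Real.cos (y 0))
          + (- y 1) * (Real.sin (x 0) - Real.sin (y 0)) := by
      rw [hd1, hd2]; ring
    rw [decomp]
    calc |(d2 * Real.cos (x 0) + (-d1) * Real.sin (x 0))
          + y 2 * (Real.cos (x 0) - Real.cos (y 0))
          + (- y 1) * (Real.sin (x 0) - Real.sin (y 0))|
        ≤ |d2 * Real.cos (x 0) + (-d1) * Real.sin (x 0)|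
          + |y 2| * |Real.cos (x 0) - Real.cos (y 0)|
          + |y 1| * |Real.sin (x 0) - Real.sin (y 0)| := by
          refine le_trans (abs_add_le _ _) ?_
          gcongr <;> [skip; rw [abs_mul, abs_neg]]
          refine le_trans (abs_add_le _ _) ?_
          gcongr; rw [abs_mul]
      _ ≤ ‖x - y‖ + κx4 * |d0| + κx3 * |d0| := by gcongr <;> exact abs_nonneg _
      _ ≤ ‖x - y‖ + κx4 * ‖x - y‖ + κx3 * ‖x - y‖ := by gcongr
      _ = (1 + κx3 + κx4) * ‖x - y‖ := by ring
  have hh : |((-(x 2 * Real.sin (x 0))) - x 1 * Real.cos (x 0))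
      - ((-(y 2 * Real.sin (y 0))) - y 1 * Real.cos (y 0))| ≤
      (1 + κx3 + κx4) * ‖x - y‖ := by
    have decomp : ((-(x 2 * Real.sin (x 0))) - x 1 * Real.cos (x 0))
        - ((-(y 2 * Real.sin (y 0))) - y 1 * Real.cos (y 0))
        = ((-d1) * Real.cos (x 0) + (-d2) * Real.sin (x 0))
          + (- y 2) * (Real.sin (x 0) - Real.sin (y 0))
          + (- y 1) * (Real.cos (x 0) - Real.cos (y 0)) := by
      rw [hd1, hd2]; ring
    rw [decomp]
    calc |((-d1) * Real.cos (x 0) + (-d2) * Real.sin (x 0))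
          + (- y 2) * (Real.sin (x 0) - Real.sin (y 0))
          + (- y 1) * (Real.cos (x 0) - Real.cos (y 0))|
        ≤ |(-d1) * Real.cos (x 0) + (-d2) * Real.sin (x 0)|
          + |y 2| * |Real.sin (x 0) - Real.sin (y 0)|
          + |y 1| * |Real.cos (x 0) - Real.cos (y 0)| := by
          refine le_trans (abs_add_le _ _) ?_
          gcongr <;> [skip; rw [abs_mul, abs_neg]]
          refine le_trans (abs_add_le _ _) ?_
          gcongr; rw [abs_mul, abs_neg]
      _ ≤ ‖x - y‖ + κx4 * |d0| + κx3 * |d0| := by gcongr <;> exact abs_nonneg _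
      _ ≤ ‖x - y‖ + κx4 * ‖x - y‖ + κx3 * ‖x - y‖ := by gcongr
      _ = (1 + κx3 + κx4) * ‖x - y‖ := by ring
  -- the wave part
  set C := α₄ * u₃ * u₄ with hC
  set S := 1 / 2 * α₄ * (u₄ ^ 2 - u₃ ^ 2) with hS
  have hwave : |C * (Real.cos (2 * x 0) - Real.cos (2 * y 0))
      + S * (Real.sin (2 * x 0) - Real.sin (2 * y 0))| ≤
      |α₄| * (κu3 ^ 2 + κu4 ^ 2) * ‖x - y‖ := by
    refine le_trans (aux_wave C S (2 * x 0) (2 * y 0)) ?_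
    have habs2 : |2 * x 0 - 2 * y 0| = 2 * |d0| := by
      rw [hd0, show 2 * x 0 - 2 * y 0 = 2 * (x 0 - y 0) by ring, abs_mul, abs_two]
    rw [habs2]
    have hsq : Real.sqrt (C ^ 2 + S ^ 2) ≤ |α₄| * (κu3 ^ 2 + κu4 ^ 2) / 2 := by
      have hB : 0 ≤ |α₄| * (κu3 ^ 2 + κu4 ^ 2) / 2 := by positivity
      have h3 : u₃ ^ 2 ≤ κu3 ^ 2 := by
        rw [← sq_abs u₃]; exact pow_le_pow_left₀ (abs_nonneg _) hu3 2
      have h4 : u₄ ^ 2 ≤ κu4 ^ 2 := by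
        rw [← sq_abs u₄]; exact pow_le_pow_left₀ (abs_nonneg _) hu4 2
      have key : C ^ 2 + S ^ 2 ≤ (|α₄| * (κu3 ^ 2 + κu4 ^ 2) / 2) ^ 2 := by
        have e1 : C ^ 2 + S ^ 2 = α₄ ^ 2 * ((u₃ ^ 2 + u₄ ^ 2) / 2) ^ 2 := by
          rw [hC, hS]; ring
        have e2 : (|α₄| * (κu3 ^ 2 + κu4 ^ 2) / 2) ^ 2
            = α₄ ^ 2 * ((κu3 ^ 2 + κu4 ^ 2) / 2) ^ 2 := by
          rw [mul_div_assoc, mul_pow, sq_abs]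
        rw [e1, e2]
        have hA : 0 ≤ (u₃ ^ 2 + u₄ ^ 2) / 2 := by positivity
        have hAB : (u₃ ^ 2 + u₄ ^ 2) / 2 ≤ (κu3 ^ 2 + κu4 ^ 2) / 2 := by linarith
        exact mul_le_mul_of_nonneg_left (pow_le_pow_left₀ hA hAB 2) (sq_nonneg _)
      calc Real.sqrt (C ^ 2 + S ^ 2)
          ≤ Real.sqrt ((|α₄| * (κu3 ^ 2 + κu4 ^ 2) / 2) ^ 2) :=
            Real.sqrt_le_sqrt key
        _ = |α₄| * (κu3 ^ 2 + κu4 ^ 2) / 2 := Real.sqrt_sq hB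
    calc Real.sqrt (C ^ 2 + S ^ 2) * (2 * |d0|)
        ≤ |α₄| * (κu3 ^ 2 + κu4 ^ 2) / 2 * (2 * ‖x - y‖) := by
          gcongr <;> positivity
      _ = |α₄| * (κu3 ^ 2 + κu4 ^ 2) * ‖x - y‖ := by ring
  -- put everything together
  have decomp : f₂ x - f₂ y =
      α₃ * u₄ * ((x 2 * Real.cos (x 0) - x 1 * Real.sin (x 0))
        - (y 2 * Real.cos (y 0) - y 1 * Real.sin (y 0)))
      + α₃ * u₃ * (((-(x 2 * Real.sin (x 0))) - x 1 * Real.cos (x 0))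
        - ((-(y 2 * Real.sin (y 0))) - y 1 * Real.cos (y 0)))
      + (C * (Real.cos (2 * x 0) - Real.cos (2 * y 0))
        + S * (Real.sin (2 * x 0) - Real.sin (2 * y 0))) := by
    rw [hf₂ x, hf₂ y, hC, hS]; ring
  rw [decomp]
  have step : |α₃ * u₄ * ((x 2 * Real.cos (x 0) - x 1 * Real.sin (x 0))
        - (y 2 * Real.cos (y 0) - y 1 * Real.sin (y 0)))
      + α₃ * u₃ * (((-(x 2 * Real.sin (x 0))) - x 1 * Real.cos (x 0))
        - ((-(y 2 * Real.sin (y 0))) - y 1 * Real.cos (y 0)))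
      + (C * (Real.cos (2 * x 0) - Real.cos (2 * y 0))
        + S * (Real.sin (2 * x 0) - Real.sin (2 * y 0)))|
      ≤ |α₃| * κu4 * ((1 + κx3 + κx4) * ‖x - y‖)
        + |α₃| * κu3 * ((1 + κx3 + κx4) * ‖x - y‖)
        + |α₄| * (κu3 ^ 2 + κu4 ^ 2) * ‖x - y‖ := by
    refine le_trans (abs_add_le _ _) ?_
    refine add_le_add (le_trans (abs_add_le _ _) (add_le_add ?_ ?_)) hwave
    · rw [abs_mul, abs_mul]
      exact mul_le_mul (mul_le_mul_of_nonneg_left hu4 (abs_nonneg α₃)) hk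
        (abs_nonneg _) (by positivity)
    · rw [abs_mul, abs_mul]
      exact mul_le_mul (mul_le_mul_of_nonneg_left hu3 (abs_nonneg α₃)) hh
        (abs_nonneg _) (by positivity)
  refine le_trans step ?_
  have hα3 : 0 ≤ |α₃| := abs_nonneg _
  have hα4 : 0 ≤ |α₄| := abs_nonneg _
  nlinarith [mul_nonneg (mul_nonneg hα3 (mul_nonneg hκu3 hκu4)) hN,
    mul_nonneg (mul_nonneg hα4 (add_nonneg hκu3 hκu4)) hN,
    mul_nonneg hα4 (mul_nonneg hκu3 hκu4), sq_nonneg (κu3 - κu4),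
    mul_nonneg (mul_nonneg hα4 (sq_nonneg (κu3 - κu4))) hN]
end

section
/- Let β₁, u₃, u₄ be real constants with |u₃| ≤ κ_{u3}, |u₄| ≤ κ_{u4}. Define h₂ : ℝ³ → ℝ by h₂(x₁, x₃, x₄) = x₃sin(x₁) - x₄cos(x₁) - β₁u₃cos(2x₁) - β₁u₄sin(2x₁). Then h₂ satisfies |h₂(x) - h₂(x̂)| ≤ (κ_{x3} + κ_{x4} + 2|β₁|(κ_{u3}+κ_{u4}) + √2)·‖x - x̂‖₂ whenever |x₃|,|x̂₃| ≤ κ_{x3} and |x₄|,|x̂₄| ≤ κ_{x4}. -/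
lemma coord_le_norm3 (z : EuclideanSpace ℝ (Fin 3)) (i : Fin 3) : |z i| ≤ ‖z‖ := by
  rw [EuclideanSpace.norm_eq]
  rw [show |z i| = Real.sqrt (|z i| ^ 2) by rw [Real.sqrt_sq (abs_nonneg _)]]
  apply Real.sqrt_le_sqrt
  simp only [Real.norm_eq_abs]
  exact Finset.single_le_sum (f := fun j => |z j| ^ 2) (fun j _ => sq_nonneg _)
    (Finset.mem_univ i)

lemma two_coords_le (z : EuclideanSpace ℝ (Fin 3)) :
    |z 1| + |z 2| ≤ Real.sqrt 2 * ‖z‖ := by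
  have hn : ‖z‖ ^ 2 = z 0 ^ 2 + z 1 ^ 2 + z 2 ^ 2 := by
    rw [EuclideanSpace.norm_eq, Real.sq_sqrt (by positivity)]
    simp [Fin.sum_univ_three, Real.norm_eq_abs, sq_abs]
  have h1 : (|z 1| + |z 2|) ^ 2 ≤ 2 * ‖z‖ ^ 2 := by
    rw [hn]
    nlinarith [sq_nonneg (|z 1| - |z 2|), sq_nonneg (z 0), sq_abs (z 1), sq_abs (z 2)]
  calc |z 1| + |z 2| = Real.sqrt ((|z 1| + |z 2|) ^ 2) := by
        rw [Real.sqrt_sq (by positivity)]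
    _ ≤ Real.sqrt (2 * ‖z‖ ^ 2) := Real.sqrt_le_sqrt h1
    _ = Real.sqrt 2 * ‖z‖ := by
        rw [Real.sqrt_mul (by norm_num), Real.sqrt_sq (norm_nonneg _)]


lemma sin_lip (a b : ℝ) : |Real.sin a - Real.sin b| ≤ |a - b| := by
  rw [Real.sin_sub_sin, abs_mul, abs_mul, abs_two]
  have h1 : |Real.sin ((a - b) / 2)| ≤ |a - b| / 2 := by
    have := Real.abs_sin_le_abs (x := (a - b) / 2)
    rwa [abs_div, abs_two] at this
  have h2 := Real.abs_cos_le_one ((a + b) / 2)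
  nlinarith [abs_nonneg (Real.sin ((a - b) / 2)), abs_nonneg (a - b)]

lemma cos_lip (a b : ℝ) : |Real.cos a - Real.cos b| ≤ |a - b| := by
  rw [Real.cos_sub_cos, abs_mul, abs_mul]
  rw [show |(-2:ℝ)| = 2 by norm_num]
  have h1 : |Real.sin ((a - b) / 2)| ≤ |a - b| / 2 := by
    have := Real.abs_sin_le_abs (x := (a - b) / 2)
    rwa [abs_div, abs_two] at this
  have h2 := Real.abs_sin_le_one ((a + b) / 2)
  nlinarith [abs_nonneg (Real.sin ((a - b) / 2)), abs_nonneg (a - b),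
    abs_nonneg (Real.sin ((a + b) / 2))]

theorem stmt_10 (β₁ u₃ u₄ κu3 κu4 κx3 κx4 : ℝ)
    (hκu3 : 0 ≤ κu3) (hκu4 : 0 ≤ κu4) (hκx3 : 0 ≤ κx3) (hκx4 : 0 ≤ κx4)
    (hu3 : |u₃| ≤ κu3) (hu4 : |u₄| ≤ κu4)
    (h₂ : EuclideanSpace ℝ (Fin 3) → ℝ)
    (hh₂ : ∀ x, h₂ x =
      x 1 * Real.sin (x 0) - x 2 * Real.cos (x 0)
      - β₁ * u₃ * Real.cos (2 * x 0) - β₁ * u₄ * Real.sin (2 * x 0)) :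
    ∀ x y : EuclideanSpace ℝ (Fin 3),
      |x 1| ≤ κx3 → |y 1| ≤ κx3 → |x 2| ≤ κx4 → |y 2| ≤ κx4 →
      |h₂ x - h₂ y| ≤
        (κx3 + κx4 + 2 * |β₁| * (κu3 + κu4) + Real.sqrt 2) * ‖x - y‖ := by
  intro x y hx1 hy1 hx2 hy2
  have hsub : ∀ i : Fin 3, (x - y) i = x i - y i := fun i => rfl
  have hD0 : (0:ℝ) ≤ ‖x - y‖ := norm_nonneg _
  have hc : ∀ i : Fin 3, |x i - y i| ≤ ‖x - y‖ := by
    intro i; rw [← hsub i]; exact coord_le_norm3 _ i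
  have h12 : |x 1 - y 1| + |x 2 - y 2| ≤ Real.sqrt 2 * ‖x - y‖ := by
    have := two_coords_le (x - y); simpa [hsub] using this
  have hsin : |Real.sin (x 0) - Real.sin (y 0)| ≤ |x 0 - y 0| := sin_lip _ _
  have hcos : |Real.cos (x 0) - Real.cos (y 0)| ≤ |x 0 - y 0| := cos_lip _ _
  have hcos2 : |Real.cos (2 * x 0) - Real.cos (2 * y 0)| ≤ 2 * |x 0 - y 0| := by
    calc |Real.cos (2 * x 0) - Real.cos (2 * y 0)| ≤ |2 * x 0 - 2 * y 0| := cos_lip _ _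
      _ = 2 * |x 0 - y 0| := by
          rw [show 2 * x 0 - 2 * y 0 = 2 * (x 0 - y 0) by ring, abs_mul, abs_two]
  have hsin2 : |Real.sin (2 * x 0) - Real.sin (2 * y 0)| ≤ 2 * |x 0 - y 0| := by
    calc |Real.sin (2 * x 0) - Real.sin (2 * y 0)| ≤ |2 * x 0 - 2 * y 0| := sin_lip _ _
      _ = 2 * |x 0 - y 0| := by
          rw [show 2 * x 0 - 2 * y 0 = 2 * (x 0 - y 0) by ring, abs_mul, abs_two]
  rw [hh₂ x, hh₂ y]
  have decomp :
      (x 1 * Real.sin (x 0) - x 2 * Real.cos (x 0)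
        - β₁ * u₃ * Real.cos (2 * x 0) - β₁ * u₄ * Real.sin (2 * x 0))
      - (y 1 * Real.sin (y 0) - y 2 * Real.cos (y 0)
        - β₁ * u₃ * Real.cos (2 * y 0) - β₁ * u₄ * Real.sin (2 * y 0))
      = ((x 1 - y 1) * Real.sin (y 0) - (x 2 - y 2) * Real.cos (y 0)
        + x 1 * (Real.sin (x 0) - Real.sin (y 0))
        - x 2 * (Real.cos (x 0) - Real.cos (y 0)))
        - β₁ * u₃ * (Real.cos (2 * x 0) - Real.cos (2 * y 0))
        - β₁ * u₄ * (Real.sin (2 * x 0) - Real.sin (2 * y 0)) := by ring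
  rw [decomp]
  have t1 : |(x 1 - y 1) * Real.sin (y 0)| ≤ |x 1 - y 1| := by
    rw [abs_mul]
    exact mul_le_of_le_one_right (abs_nonneg _) (Real.abs_sin_le_one _)
  have t2 : |(x 2 - y 2) * Real.cos (y 0)| ≤ |x 2 - y 2| := by
    rw [abs_mul]
    exact mul_le_of_le_one_right (abs_nonneg _) (Real.abs_cos_le_one _)
  have t3 : |x 1 * (Real.sin (x 0) - Real.sin (y 0))| ≤ κx3 * |x 0 - y 0| := by
    rw [abs_mul]; exact mul_le_mul hx1 hsin (abs_nonneg _) hκx3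
  have t4 : |x 2 * (Real.cos (x 0) - Real.cos (y 0))| ≤ κx4 * |x 0 - y 0| := by
    rw [abs_mul]; exact mul_le_mul hx2 hcos (abs_nonneg _) hκx4
  have t5 : |β₁ * u₃ * (Real.cos (2 * x 0) - Real.cos (2 * y 0))|
      ≤ |β₁| * κu3 * (2 * |x 0 - y 0|) := by
    rw [abs_mul, abs_mul]
    exact mul_le_mul (mul_le_mul le_rfl hu3 (abs_nonneg _) (abs_nonneg _)) hcos2
      (abs_nonneg _) (by positivity)
  have t6 : |β₁ * u₄ * (Real.sin (2 * x 0) - Real.sin (2 * y 0))|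
      ≤ |β₁| * κu4 * (2 * |x 0 - y 0|) := by
    rw [abs_mul, abs_mul]
    exact mul_le_mul (mul_le_mul le_rfl hu4 (abs_nonneg _) (abs_nonneg _)) hsin2
      (abs_nonneg _) (by positivity)
  have tri : ∀ a b : ℝ, |a - b| ≤ |a| + |b| := fun a b => abs_sub a b
  have step :
      |((x 1 - y 1) * Real.sin (y 0) - (x 2 - y 2) * Real.cos (y 0)
        + x 1 * (Real.sin (x 0) - Real.sin (y 0))
        - x 2 * (Real.cos (x 0) - Real.cos (y 0)))
        - β₁ * u₃ * (Real.cos (2 * x 0) - Real.cos (2 * y 0))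
        - β₁ * u₄ * (Real.sin (2 * x 0) - Real.sin (2 * y 0))|
      ≤ |(x 1 - y 1) * Real.sin (y 0)| + |(x 2 - y 2) * Real.cos (y 0)|
        + |x 1 * (Real.sin (x 0) - Real.sin (y 0))|
        + |x 2 * (Real.cos (x 0) - Real.cos (y 0))|
        + |β₁ * u₃ * (Real.cos (2 * x 0) - Real.cos (2 * y 0))|
        + |β₁ * u₄ * (Real.sin (2 * x 0) - Real.sin (2 * y 0))| := by
    calc _ ≤ |((x 1 - y 1) * Real.sin (y 0) - (x 2 - y 2) * Real.cos (y 0)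
            + x 1 * (Real.sin (x 0) - Real.sin (y 0))
            - x 2 * (Real.cos (x 0) - Real.cos (y 0)))
            - β₁ * u₃ * (Real.cos (2 * x 0) - Real.cos (2 * y 0))|
            + |β₁ * u₄ * (Real.sin (2 * x 0) - Real.sin (2 * y 0))| := tri _ _
      _ ≤ (|(x 1 - y 1) * Real.sin (y 0) - (x 2 - y 2) * Real.cos (y 0)
            + x 1 * (Real.sin (x 0) - Real.sin (y 0))
            - x 2 * (Real.cos (x 0) - Real.cos (y 0))|
            + |β₁ * u₃ * (Real.cos (2 * x 0) - Real.cos (2 * y 0))|)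
            + |β₁ * u₄ * (Real.sin (2 * x 0) - Real.sin (2 * y 0))| := by
          gcongr; exact tri _ _
      _ ≤ _ := by
          have a1 := tri ((x 1 - y 1) * Real.sin (y 0) - (x 2 - y 2) * Real.cos (y 0)
            + x 1 * (Real.sin (x 0) - Real.sin (y 0)))
            (x 2 * (Real.cos (x 0) - Real.cos (y 0)))
          have a2 := abs_add_le ((x 1 - y 1) * Real.sin (y 0) - (x 2 - y 2) * Real.cos (y 0))
            (x 1 * (Real.sin (x 0) - Real.sin (y 0)))
          have a3 := tri ((x 1 - y 1) * Real.sin (y 0)) ((x 2 - y 2) * Real.cos (y 0))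
          linarith
  have m3 : κx3 * |x 0 - y 0| ≤ κx3 * ‖x - y‖ :=
    mul_le_mul_of_nonneg_left (hc 0) hκx3
  have m4 : κx4 * |x 0 - y 0| ≤ κx4 * ‖x - y‖ :=
    mul_le_mul_of_nonneg_left (hc 0) hκx4
  have m5 : |β₁| * κu3 * (2 * |x 0 - y 0|) ≤ 2 * |β₁| * κu3 * ‖x - y‖ := by
    have := mul_le_mul_of_nonneg_left (hc 0) (by positivity : (0:ℝ) ≤ 2 * |β₁| * κu3)
    linarith [this]
  have m6 : |β₁| * κu4 * (2 * |x 0 - y 0|) ≤ 2 * |β₁| * κu4 * ‖x - y‖ := by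
    have := mul_le_mul_of_nonneg_left (hc 0) (by positivity : (0:ℝ) ≤ 2 * |β₁| * κu4)
    linarith [this]
  have expand : (κx3 + κx4 + 2 * |β₁| * (κu3 + κu4) + Real.sqrt 2) * ‖x - y‖
      = κx3 * ‖x - y‖ + κx4 * ‖x - y‖ + 2 * |β₁| * κu3 * ‖x - y‖
        + 2 * |β₁| * κu4 * ‖x - y‖ + Real.sqrt 2 * ‖x - y‖ := by ring
  rw [expand]
  linarith
end

section
/- Let f = (f₁, f₂, f₃, f₄) : ℝ⁴ → ℝ⁴ with f₁ constant equal to -α₁, f₂(x) = α₃x₄u₄cos(x₁) - α₃x₃u₄sin(x₁) - α₃x₄u₃sin(x₁) - α₃x₃u₃cos(x₁) + α₄u₃u₄cos(2x₁) + (1/2)α₄(u₄²-u₃²)sin(2x₁) + α₆, f₃(x) = α₈u₄cos(x₁) - α₈u₃sin(x₁), f₄(x) = α₁₀u₃cos(x₁) + α₁₀u₄sin(x₁), where |u₃| ≤ κ_{u3}, |u₄| ≤ κ_{u4}. Then for all x, x̂ with |x₃|,|x̂₃| ≤ κ_{x3}, |x₄|,|x̂₄| ≤ κ_{x4}, ‖f(x)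 - f(x̂)‖₂ ≤ γ_f ‖x - x̂‖₂, where γ_f = sqrt(γ̃_f² + (|α₈|² + |α₁₀|²)(κ_{u3}+κ_{u4})²) and γ̃_f = |α₃|((κ_{u3}+κ_{u4})(1+κ_{x3}+κ_{x4}) + 2κ_{u3}κ_{u4}) + |α₄|(κ_{u3}(1+κ_{u3}) + κ_{u4}(1+κ_{u4})). -/
set_option maxHeartbeats 2000000

lemma aux_lip (c s a b : ℝ) :
    |(c * Real.cos a + s * Real.sin a) - (c * Real.cos b + s * Real.sin b)| ≤
      Real.sqrt (c ^ 2 + s ^ 2) * |a - b| := by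
  have key : ∀ θ : ℝ, HasDerivAt (fun θ => c * Real.cos θ + s * Real.sin θ)
      (c * (-Real.sin θ) + s * Real.cos θ) θ := fun θ =>
    ((Real.hasDerivAt_cos θ).const_mul c).add ((Real.hasDerivAt_sin θ).const_mul s)
  have hb : ∀ θ : ℝ, ‖c * (-Real.sin θ) + s * Real.cos θ‖ ≤ Real.sqrt (c ^ 2 + s ^ 2) := by
    intro θ
    rw [Real.norm_eq_abs, ← Real.sqrt_sq_eq_abs]
    apply Real.sqrt_le_sqrt
    nlinarith [Real.sin_sq_add_cos_sq θ, sq_nonneg (c * Real.cos θ + s * Real.sin θ)]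
  have h := Convex.norm_image_sub_le_of_norm_hasDerivWithin_le
      (f := fun θ => c * Real.cos θ + s * Real.sin θ)
      (f' := fun θ => c * (-Real.sin θ) + s * Real.cos θ)
      (fun θ _ => (key θ).hasDerivWithinAt) (fun θ _ => hb θ)
      convex_univ (Set.mem_univ b) (Set.mem_univ a)
  simpa [Real.norm_eq_abs] using h

theorem stmt_12 (α₁ α₃ α₄ α₆ α₈ α₁₀ u₃ u₄ κu3 κu4 κx3 κx4 : ℝ)
    (hκu3 : 0 ≤ κu3) (hκu4 : 0 ≤ κu4) (hκx3 : 0 ≤ κx3) (hκx4 : 0 ≤ κx4)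
    (hu3 : |u₃| ≤ κu3) (hu4 : |u₄| ≤ κu4)
    (f : EuclideanSpace ℝ (Fin 4) → EuclideanSpace ℝ (Fin 4))
    (hf1 : ∀ x, f x 0 = -α₁)
    (hf2 : ∀ x, f x 1 =
      α₃ * x 3 * u₄ * Real.cos (x 0) - α₃ * x 2 * u₄ * Real.sin (x 0)
      - α₃ * x 3 * u₃ * Real.sin (x 0) - α₃ * x 2 * u₃ * Real.cos (x 0)
      + α₄ * u₃ * u₄ * Real.cos (2 * x 0)
      + (1 / 2) * α₄ * (u₄ ^ 2 - u₃ ^ 2) * Real.sin (2 * x 0) + α₆)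
    (hf3 : ∀ x, f x 2 = α₈ * u₄ * Real.cos (x 0) - α₈ * u₃ * Real.sin (x 0))
    (hf4 : ∀ x, f x 3 = α₁₀ * u₃ * Real.cos (x 0) + α₁₀ * u₄ * Real.sin (x 0)) :
    ∀ x y : EuclideanSpace ℝ (Fin 4),
      |x 2| ≤ κx3 → |y 2| ≤ κx3 → |x 3| ≤ κx4 → |y 3| ≤ κx4 →
      ‖f x - f y‖ ≤
        Real.sqrt
          ((|α₃| * ((κu3 + κu4) * (1 + κx3 + κx4) + 2 * κu3 * κu4)
              + |α₄| * (κu3 * (1 + κu3) + κu4 * (1 + κu4))) ^ 2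
            + (|α₈| ^ 2 + |α₁₀| ^ 2) * (κu3 + κu4) ^ 2) * ‖x - y‖ := by
  intro x y hx2 hy2 hx3 hy3
  have hr : (0:ℝ) ≤ κu3 + κu4 := by linarith
  have hu3sq : u₃ ^ 2 ≤ κu3 ^ 2 := by
    calc u₃ ^ 2 = |u₃| ^ 2 := (sq_abs _).symm
      _ ≤ κu3 ^ 2 := pow_le_pow_left₀ (abs_nonneg _) hu3 2
  have hu4sq : u₄ ^ 2 ≤ κu4 ^ 2 := by
    calc u₄ ^ 2 = |u₄| ^ 2 := (sq_abs _).symm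
      _ ≤ κu4 ^ 2 := pow_le_pow_left₀ (abs_nonneg _) hu4 2
  have hr2 : u₃ ^ 2 + u₄ ^ 2 ≤ (κu3 + κu4) ^ 2 := by
    have := mul_nonneg hκu3 hκu4
    nlinarith [this, hu3sq, hu4sq]
  -- abbreviations
  set t : ℝ := |x 0 - y 0| with ht_def
  set s : ℝ := Real.sqrt ((x 2 - y 2) ^ 2 + (x 3 - y 3) ^ 2) with hs_def
  have ht0 : 0 ≤ t := abs_nonneg _
  have hs0 : 0 ≤ s := Real.sqrt_nonneg _
  have hs2 : s ^ 2 = (x 2 - y 2) ^ 2 + (x 3 - y 3) ^ 2 := Real.sq_sqrt (by positivity)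
  have ht2 : t ^ 2 = (x 0 - y 0) ^ 2 := sq_abs _
  clear_value t s
  -- Lipschitz bounds for p(θ) = u₄ cos θ - u₃ sin θ and q(θ) = u₃ cos θ + u₄ sin θ
  have hsqrt_p : Real.sqrt (u₄ ^ 2 + (-u₃) ^ 2) ≤ κu3 + κu4 := by
    rw [← Real.sqrt_sq hr]; apply Real.sqrt_le_sqrt; linarith [hr2]
  have hsqrt_q : Real.sqrt (u₃ ^ 2 + u₄ ^ 2) ≤ κu3 + κu4 := by
    rw [← Real.sqrt_sq hr]; apply Real.sqrt_le_sqrt; linarith [hr2]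
  have hplip : |(u₄ * Real.cos (x 0) - u₃ * Real.sin (x 0))
      - (u₄ * Real.cos (y 0) - u₃ * Real.sin (y 0))| ≤ (κu3 + κu4) * t := by
    have h := aux_lip u₄ (-u₃) (x 0) (y 0)
    rw [← ht_def] at h
    have h2 : Real.sqrt (u₄ ^ 2 + (-u₃) ^ 2) * t ≤ (κu3 + κu4) * t :=
      mul_le_mul_of_nonneg_right hsqrt_p ht0
    calc |(u₄ * Real.cos (x 0) - u₃ * Real.sin (x 0))
        - (u₄ * Real.cos (y 0) - u₃ * Real.sin (y 0))|
        = |(u₄ * Real.cos (x 0) + (-u₃) * Real.sin (x 0))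
          - (u₄ * Real.cos (y 0) + (-u₃) * Real.sin (y 0))| := by ring_nf
      _ ≤ Real.sqrt (u₄ ^ 2 + (-u₃) ^ 2) * t := h
      _ ≤ (κu3 + κu4) * t := h2
  have hqlip : |(u₃ * Real.cos (x 0) + u₄ * Real.sin (x 0))
      - (u₃ * Real.cos (y 0) + u₄ * Real.sin (y 0))| ≤ (κu3 + κu4) * t := by
    have h := aux_lip u₃ u₄ (x 0) (y 0)
    rw [← ht_def] at h
    have h2 : Real.sqrt (u₃ ^ 2 + u₄ ^ 2) * t ≤ (κu3 + κu4) * t :=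
      mul_le_mul_of_nonneg_right hsqrt_q ht0
    exact h.trans h2
  -- bound on second component of the difference
  set P : ℝ := u₄ * Real.cos (x 0) - u₃ * Real.sin (x 0) with hP_def
  set Q : ℝ := u₃ * Real.cos (x 0) + u₄ * Real.sin (x 0) with hQ_def
  set P' : ℝ := u₄ * Real.cos (y 0) - u₃ * Real.sin (y 0) with hP'_def
  set Q' : ℝ := u₃ * Real.cos (y 0) + u₄ * Real.sin (y 0) with hQ'_def
  clear_value P Q P' Q'
  have hPQ : P ^ 2 + Q ^ 2 = u₃ ^ 2 + u₄ ^ 2 := by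
    rw [hP_def, hQ_def]
    linear_combination (u₃ ^ 2 + u₄ ^ 2) * (Real.sin_sq_add_cos_sq (x 0))
  have hCS : |(x 3 - y 3) * P - (x 2 - y 2) * Q| ≤ s * (κu3 + κu4) := by
    rw [← Real.sqrt_sq_eq_abs]
    have h1 : ((x 3 - y 3) * P - (x 2 - y 2) * Q) ^ 2
        ≤ ((x 2 - y 2) ^ 2 + (x 3 - y 3) ^ 2) * (κu3 + κu4) ^ 2 := by
      have hid : ((x 3 - y 3) * P - (x 2 - y 2) * Q) ^ 2
          + ((x 3 - y 3) * Q + (x 2 - y 2) * P) ^ 2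
          = ((x 2 - y 2) ^ 2 + (x 3 - y 3) ^ 2) * (P ^ 2 + Q ^ 2) := by ring
      have hm : ((x 2 - y 2) ^ 2 + (x 3 - y 3) ^ 2) * (P ^ 2 + Q ^ 2)
          ≤ ((x 2 - y 2) ^ 2 + (x 3 - y 3) ^ 2) * (κu3 + κu4) ^ 2 :=
        mul_le_mul_of_nonneg_left (by linarith [hPQ, hr2]) (by positivity)
      linarith [sq_nonneg ((x 3 - y 3) * Q + (x 2 - y 2) * P), hid, hm]
    calc Real.sqrt (((x 3 - y 3) * P - (x 2 - y 2) * Q) ^ 2)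
        ≤ Real.sqrt (((x 2 - y 2) ^ 2 + (x 3 - y 3) ^ 2) * (κu3 + κu4) ^ 2) :=
          Real.sqrt_le_sqrt h1
      _ = s * (κu3 + κu4) := by
          rw [Real.sqrt_mul (by positivity), Real.sqrt_sq hr, hs_def]
  -- the 2θ trigonometric part
  have hGlip : |((α₄ * u₃ * u₄) * Real.cos (2 * x 0)
        + ((1/2) * α₄ * (u₄ ^ 2 - u₃ ^ 2)) * Real.sin (2 * x 0))
      - ((α₄ * u₃ * u₄) * Real.cos (2 * y 0)
        + ((1/2) * α₄ * (u₄ ^ 2 - u₃ ^ 2)) * Real.sin (2 * y 0))|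
      ≤ |α₄| * (κu3 ^ 2 + κu4 ^ 2) * t := by
    have h := aux_lip (α₄ * u₃ * u₄) ((1/2) * α₄ * (u₄ ^ 2 - u₃ ^ 2)) (2 * x 0) (2 * y 0)
    have habs : |2 * x 0 - 2 * y 0| = 2 * t := by
      rw [ht_def, show (2:ℝ) * x 0 - 2 * y 0 = 2 * (x 0 - y 0) by ring, abs_mul, abs_two]
    have hsq : Real.sqrt ((α₄ * u₃ * u₄) ^ 2 + ((1/2) * α₄ * (u₄ ^ 2 - u₃ ^ 2)) ^ 2)
        ≤ |α₄| * (κu3 ^ 2 + κu4 ^ 2) / 2 := by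
      have h0 : (0:ℝ) ≤ |α₄| * (κu3 ^ 2 + κu4 ^ 2) / 2 := by positivity
      rw [← Real.sqrt_sq h0]
      apply Real.sqrt_le_sqrt
      have hA : (α₄ * u₃ * u₄) ^ 2 + ((1/2) * α₄ * (u₄ ^ 2 - u₃ ^ 2)) ^ 2
          = α₄ ^ 2 * (u₃ ^ 2 + u₄ ^ 2) ^ 2 / 4 := by ring
      have hB : (|α₄| * (κu3 ^ 2 + κu4 ^ 2) / 2) ^ 2
          = α₄ ^ 2 * (κu3 ^ 2 + κu4 ^ 2) ^ 2 / 4 := by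
        rw [div_pow, mul_pow, sq_abs]; ring
      rw [hA, hB]
      have hle : u₃ ^ 2 + u₄ ^ 2 ≤ κu3 ^ 2 + κu4 ^ 2 := by linarith
      have hm : α₄ ^ 2 * (((κu3 ^ 2 + κu4 ^ 2) - (u₃ ^ 2 + u₄ ^ 2))
          * ((κu3 ^ 2 + κu4 ^ 2) + (u₃ ^ 2 + u₄ ^ 2))) ≥ 0 :=
        mul_nonneg (sq_nonneg α₄) (mul_nonneg (by linarith) (by positivity))
      linarith [hm]
    calc _ ≤ Real.sqrt ((α₄ * u₃ * u₄) ^ 2 + ((1/2) * α₄ * (u₄ ^ 2 - u₃ ^ 2)) ^ 2)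
          * |2 * x 0 - 2 * y 0| := h
      _ = Real.sqrt ((α₄ * u₃ * u₄) ^ 2 + ((1/2) * α₄ * (u₄ ^ 2 - u₃ ^ 2)) ^ 2) * (2 * t) := by
          rw [habs]
      _ ≤ (|α₄| * (κu3 ^ 2 + κu4 ^ 2) / 2) * (2 * t) := by
          apply mul_le_mul_of_nonneg_right hsq (by positivity)
      _ = |α₄| * (κu3 ^ 2 + κu4 ^ 2) * t := by ring
  -- component bounds
  have hΔ2eq : f x 1 - f y 1 = α₃ * ((x 3 - y 3) * P - (x 2 - y 2) * Q)
      + α₃ * (y 3 * (P - P') - y 2 * (Q - Q'))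
      + (((α₄ * u₃ * u₄) * Real.cos (2 * x 0)
        + ((1/2) * α₄ * (u₄ ^ 2 - u₃ ^ 2)) * Real.sin (2 * x 0))
      - ((α₄ * u₃ * u₄) * Real.cos (2 * y 0)
        + ((1/2) * α₄ * (u₄ ^ 2 - u₃ ^ 2)) * Real.sin (2 * y 0))) := by
    rw [hf2 x, hf2 y, hP_def, hQ_def, hP'_def, hQ'_def]; ring
  have h2 : |f x 1 - f y 1| ≤ |α₃| * (κu3 + κu4) * s
      + (|α₃| * (κu3 + κu4) * (κx3 + κx4) + |α₄| * (κu3 ^ 2 + κu4 ^ 2)) * t := by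
    rw [hΔ2eq]
    have t1 : |α₃ * ((x 3 - y 3) * P - (x 2 - y 2) * Q)| ≤ |α₃| * (s * (κu3 + κu4)) := by
      rw [abs_mul]
      exact mul_le_mul_of_nonneg_left hCS (abs_nonneg _)
    have t2 : |α₃ * (y 3 * (P - P') - y 2 * (Q - Q'))|
        ≤ |α₃| * (κx4 * ((κu3 + κu4) * t) + κx3 * ((κu3 + κu4) * t)) := by
      rw [abs_mul]
      apply mul_le_mul_of_nonneg_left _ (abs_nonneg _)
      calc |y 3 * (P - P') - y 2 * (Q - Q')| ≤ |y 3 * (P - P')| + |y 2 * (Q - Q')| :=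
            abs_sub _ _
        _ = |y 3| * |P - P'| + |y 2| * |Q - Q'| := by rw [abs_mul, abs_mul]
        _ ≤ κx4 * ((κu3 + κu4) * t) + κx3 * ((κu3 + κu4) * t) := by
            apply add_le_add
            · exact mul_le_mul hy3 hplip (abs_nonneg _) hκx4
            · exact mul_le_mul hy2 hqlip (abs_nonneg _) hκx3
    calc |_ + _ + _| ≤ |α₃ * ((x 3 - y 3) * P - (x 2 - y 2) * Q)|
          + |α₃ * (y 3 * (P - P') - y 2 * (Q - Q'))|
          + |(((α₄ * u₃ * u₄) * Real.cos (2 * x 0)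
            + ((1/2) * α₄ * (u₄ ^ 2 - u₃ ^ 2)) * Real.sin (2 * x 0))
          - ((α₄ * u₃ * u₄) * Real.cos (2 * y 0)
            + ((1/2) * α₄ * (u₄ ^ 2 - u₃ ^ 2)) * Real.sin (2 * y 0)))| := abs_add_three _ _ _
      _ ≤ |α₃| * (s * (κu3 + κu4)) + |α₃| * (κx4 * ((κu3 + κu4) * t) + κx3 * ((κu3 + κu4) * t))
          + |α₄| * (κu3 ^ 2 + κu4 ^ 2) * t := add_le_add (add_le_add t1 t2) hGlip
      _ = |α₃| * (κu3 + κu4) * s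
          + (|α₃| * (κu3 + κu4) * (κx3 + κx4) + |α₄| * (κu3 ^ 2 + κu4 ^ 2)) * t := by ring
  have h3 : |f x 2 - f y 2| ≤ |α₈| * ((κu3 + κu4) * t) := by
    have heq : f x 2 - f y 2 = α₈ * (P - P') := by
      rw [hf3 x, hf3 y, hP_def, hP'_def]; ring
    rw [heq, abs_mul]
    exact mul_le_mul_of_nonneg_left hplip (abs_nonneg _)
  have h4 : |f x 3 - f y 3| ≤ |α₁₀| * ((κu3 + κu4) * t) := by
    have heq : f x 3 - f y 3 = α₁₀ * (Q - Q') := by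
      rw [hf4 x, hf4 y, hQ_def, hQ'_def]; ring
    rw [heq, abs_mul]
    exact mul_le_mul_of_nonneg_left hqlip (abs_nonneg _)
  -- assemble
  set g : ℝ := |α₃| * ((κu3 + κu4) * (1 + κx3 + κx4) + 2 * κu3 * κu4)
      + |α₄| * (κu3 * (1 + κu3) + κu4 * (1 + κu4)) with hg_def
  set a : ℝ := |α₃| * (κu3 + κu4) with ha_def
  set b : ℝ := |α₃| * (κu3 + κu4) * (κx3 + κx4) + |α₄| * (κu3 ^ 2 + κu4 ^ 2) with hb_def
  clear_value g a b
  have ha0 : 0 ≤ a := by rw [ha_def]; positivity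
  have hb0 : 0 ≤ b := by rw [hb_def]; positivity
  have hab : a + b ≤ g := by
    rw [ha_def, hb_def, hg_def]
    have h1 : 0 ≤ |α₃| * (κu3 * κu4) := mul_nonneg (abs_nonneg α₃) (mul_nonneg hκu3 hκu4)
    have h2 : 0 ≤ |α₄| * (κu3 + κu4) := mul_nonneg (abs_nonneg α₄) hr
    linarith [h1, h2]
  have hg0 : 0 ≤ g := le_trans (by linarith) hab
  set C : ℝ := g ^ 2 + (|α₈| ^ 2 + |α₁₀| ^ 2) * (κu3 + κu4) ^ 2 with hC_def
  clear_value C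
  have hC0 : 0 ≤ C := by rw [hC_def]; positivity
  have hsum : (f x 1 - f y 1) ^ 2 + (f x 2 - f y 2) ^ 2 + (f x 3 - f y 3) ^ 2
      ≤ C * ((x 0 - y 0) ^ 2 + (x 2 - y 2) ^ 2 + (x 3 - y 3) ^ 2) := by
    have e2 : (f x 1 - f y 1) ^ 2 ≤ (a * s + b * t) ^ 2 := by
      rw [← sq_abs]
      exact pow_le_pow_left₀ (abs_nonneg _) h2 2
    have e3 : (f x 2 - f y 2) ^ 2 ≤ (|α₈| * ((κu3 + κu4) * t)) ^ 2 := by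
      rw [← sq_abs]
      exact pow_le_pow_left₀ (abs_nonneg _) h3 2
    have e4 : (f x 3 - f y 3) ^ 2 ≤ (|α₁₀| * ((κu3 + κu4) * t)) ^ 2 := by
      rw [← sq_abs]
      exact pow_le_pow_left₀ (abs_nonneg _) h4 2
    have key : (a * s + b * t) ^ 2 + (|α₈| * ((κu3 + κu4) * t)) ^ 2
        + (|α₁₀| * ((κu3 + κu4) * t)) ^ 2 ≤ C * (t ^ 2 + s ^ 2) := by
      rw [hC_def]
      have hg2 : (0:ℝ) ≤ g ^ 2 - (a + b) ^ 2 := by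
        have h := pow_le_pow_left₀ (by linarith : (0:ℝ) ≤ a + b) hab 2
        linarith [h]
      have k1 : (a * s + b * t) ^ 2 ≤ g ^ 2 * (t ^ 2 + s ^ 2) := by
        have w1 : (0:ℝ) ≤ (a * t - b * s) ^ 2 := sq_nonneg _
        have w2 : (0:ℝ) ≤ (a * b) * (s ^ 2 + t ^ 2) :=
          mul_nonneg (mul_nonneg ha0 hb0) (by positivity)
        have w3 : (0:ℝ) ≤ (g ^ 2 - (a + b) ^ 2) * (s ^ 2 + t ^ 2) :=
          mul_nonneg hg2 (by positivity)
        linarith [w1, w2, w3]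
      have k2 : (|α₈| * ((κu3 + κu4) * t)) ^ 2 + (|α₁₀| * ((κu3 + κu4) * t)) ^ 2
          ≤ (|α₈| ^ 2 + |α₁₀| ^ 2) * (κu3 + κu4) ^ 2 * (t ^ 2 + s ^ 2) := by
        have w4 : (0:ℝ) ≤ (|α₈| ^ 2 + |α₁₀| ^ 2) * ((κu3 + κu4) ^ 2 * s ^ 2) :=
          mul_nonneg (by positivity) (by positivity)
        linarith [w4]
      linarith [k1, k2]
    have : C * (t ^ 2 + s ^ 2) = C * ((x 0 - y 0) ^ 2 + (x 2 - y 2) ^ 2 + (x 3 - y 3) ^ 2) := by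
      rw [ht2, hs2]; ring
    linarith [e2, e3, e4, key, this ▸ key]
  have hxynorm : (x 0 - y 0) ^ 2 + (x 2 - y 2) ^ 2 + (x 3 - y 3) ^ 2 ≤ ‖x - y‖ ^ 2 := by
    have : ‖x - y‖ ^ 2 = (x 0 - y 0) ^ 2 + (x 1 - y 1) ^ 2 + (x 2 - y 2) ^ 2
        + (x 3 - y 3) ^ 2 := by
      rw [EuclideanSpace.norm_eq, Real.sq_sqrt (by positivity)]
      simp [Fin.sum_univ_four, sq_abs]
    linarith [sq_nonneg (x 1 - y 1), this]
  have hfnorm : ‖f x - f y‖ = Real.sqrt ((f x 1 - f y 1) ^ 2 + (f x 2 - f y 2) ^ 2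
      + (f x 3 - f y 3) ^ 2) := by
    rw [EuclideanSpace.norm_eq]
    congr 1
    simp only [Fin.sum_univ_four]
    have h0 : f x 0 - f y 0 = 0 := by rw [hf1 x, hf1 y]; ring
    simp [h0, sq_abs]
  rw [hfnorm]
  calc Real.sqrt ((f x 1 - f y 1) ^ 2 + (f x 2 - f y 2) ^ 2 + (f x 3 - f y 3) ^ 2)
      ≤ Real.sqrt (C * ‖x - y‖ ^ 2) := by
        apply Real.sqrt_le_sqrt
        calc (f x 1 - f y 1) ^ 2 + (f x 2 - f y 2) ^ 2 + (f x 3 - f y 3) ^ 2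
            ≤ C * ((x 0 - y 0) ^ 2 + (x 2 - y 2) ^ 2 + (x 3 - y 3) ^ 2) := hsum
          _ ≤ C * ‖x - y‖ ^ 2 := mul_le_mul_of_nonneg_left hxynorm hC0
    _ = Real.sqrt C * ‖x - y‖ := by
        rw [Real.sqrt_mul hC0, Real.sqrt_sq (norm_nonneg _)]
end
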